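/- arXiv:1706.08246 — 2 statements merged into one kernel-verified Lean document; each statement's English description precedes it below -/
import Mathlib

section
/- Let 0 < α < 1 and let u : ℝ → ℝ be a C² 2π-periodic function which is not constant, with amplitude V = max u − min u > 0. Then there is a constant c₁ > 0 depending only on α such that for every x ∈ ℝ: D_α u'(x) = ∫_ℝ |u'(x) − u'(x+z)|² |z|^{−(1+α)} dz ≥ c₁ |u'(x)|^{2+α} / V^α. -/
/-!
Let `M = u'(x)` and `R = 2V/|M|`. Over `[x, x + R]` the function `u` moves by at most `V`, while
`R M` has size `2V`, so by the fundamental theorem of calculus `∫₀ᴿ |M - u'(x+z)| dz ≥ V`.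
Cauchy–Schwarz with the weight `z^(1+α)` turns this into `V² ≤ D_α u'(x) · R^(2+α)/(2+α)`,
which is the claim with `c₁ = (2+α)/2^(2+α)`. The dissipation integral is finite, hence not a
junk value, because `u'` is bounded and Lipschitz, being periodic and `C¹`.
-/

open Real MeasureTheory

/-- Commutator (alignment) forcing `T(ρ,u)(x) = ∫ ρ(x+z)(u(x+z)-u(x))|z|^{-(1+α)} dz`. -/
noncomputable def commT (α : ℝ) (ρ u : ℝ → ℝ) (x : ℝ) : ℝ :=
  ∫ z : ℝ, ρ (x + z) * (u (x + z) - u x) / |z| ^ (1 + α)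

/-- Fractional Laplacian `Λ^α f(x) = ∫ (f(x) - f(x+z))|z|^{-(1+α)} dz`. -/
noncomputable def fracLap (α : ℝ) (f : ℝ → ℝ) (x : ℝ) : ℝ :=
  ∫ z : ℝ, (f x - f (x + z)) / |z| ^ (1 + α)

/-- Dissipation functional `D_α g(x) = ∫ |g(x) - g(x+z)|² |z|^{-(1+α)} dz`. -/
noncomputable def dissip (α : ℝ) (g : ℝ → ℝ) (x : ℝ) : ℝ :=
  ∫ z : ℝ, (g x - g (x + z)) ^ 2 / |z| ^ (1 + α)

/-- The fractional Euler alignment system holds at the point `(x,t)`: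
`ρ_t + (ρu)_x = 0` and `u_t + u u_x = T(ρ,u)`. -/
def IsEulerAlignSol (α : ℝ) (ρ u : ℝ → ℝ → ℝ) (x t : ℝ) : Prop :=
  deriv (fun s => ρ x s) t + deriv (fun y => ρ y t * u y t) x = 0 ∧
  deriv (fun s => u x s) t + u x t * deriv (fun y => u y t) x
    = commT α (fun y => ρ y t) (fun y => u y t) x

open Set Function
open scoped NNReal

theorem Function.Periodic.deriv {𝕜 E : Type*} [NontriviallyNormedField 𝕜] [NormedAddCommGroup E]
    [NormedSpace 𝕜 E] {f : 𝕜 → E} {c : 𝕜} (hf : Periodic f c) :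
    Periodic (_root_.deriv f) c := fun y => by
  rw [← deriv_comp_add_const, show (fun t => f (t + c)) = f from funext hf]

theorem Function.Periodic.exists_lipschitzWith {E : Type*} [NormedAddCommGroup E]
    [NormedSpace ℝ E] {f : ℝ → E} {c : ℝ} (hf : Periodic f c) (hc : c ≠ 0) (hf1 : ContDiff ℝ 1 f) :
    ∃ K, LipschitzWith K f := by
  obtain ⟨K, hK⟩ := ((hf.deriv.compact_of_continuous hc
    (hf1.continuous_deriv le_rfl)).image continuous_nnnorm).bddAbove
  exact ⟨K, lipschitzWith_of_nnnorm_deriv_le (hf1.differentiable one_ne_zero)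
    fun y => hK ⟨_, mem_range_self y, rfl⟩⟩

theorem sq_div_abs_rpow_le_mul_one_add_abs_rpow {α d z L B : ℝ} (hα₀ : 0 ≤ α) (hα₁ : α ≤ 1)
    (hL : |d| ≤ L * |z|) (hB : |d| ≤ B) :
    d ^ 2 / |z| ^ (1 + α) ≤ 4 * (L ^ 2 + B ^ 2) * (1 + |z|) ^ (-(1 + α)) := by
  set t := |z|
  have ht : 0 ≤ t := abs_nonneg z
  rcases ht.eq_or_lt with ht0 | htpos
  · rw [← ht0, zero_rpow (by linarith), div_zero]; positivity
  have hpow : 0 < t ^ (1 + α) := rpow_pos_of_pos htpos _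
  have hpow' : 0 < (1 + t) ^ (1 + α) := rpow_pos_of_pos (by linarith) _
  rw [rpow_neg (by linarith), ← div_eq_mul_inv, div_le_div_iff₀ hpow hpow']
  have h2 : (2 : ℝ) ^ (1 + α) ≤ 4 := by
    calc (2 : ℝ) ^ (1 + α) ≤ 2 ^ (2 : ℝ) :=
          rpow_le_rpow_of_exponent_le (by norm_num) (by linarith)
      _ = 4 := by norm_num
  rcases le_total t 1 with ht1 | ht1
  · have hd : d ^ 2 ≤ L ^ 2 * t ^ (1 + α) := by
      calc d ^ 2 = |d| ^ 2 := (sq_abs d).symm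
        _ ≤ (L * t) ^ 2 := pow_le_pow_left₀ (abs_nonneg d) hL 2
        _ = L ^ 2 * t ^ (2 : ℝ) := by rw [rpow_two]; ring
        _ ≤ L ^ 2 * t ^ (1 + α) :=
          mul_le_mul_of_nonneg_left (rpow_le_rpow_of_exponent_ge htpos ht1 (by linarith))
            (sq_nonneg L)
    have h1t : (1 + t) ^ (1 + α) ≤ 4 :=
      (rpow_le_rpow (by linarith) (by linarith) (by linarith)).trans h2
    nlinarith [sq_nonneg B, sq_nonneg d]
  · have hd : d ^ 2 ≤ B ^ 2 := by
      rw [← sq_abs]; exact pow_le_pow_left₀ (abs_nonneg d) hB 2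
    have h1t : (1 + t) ^ (1 + α) ≤ 4 * t ^ (1 + α) := by
      calc (1 + t) ^ (1 + α) ≤ (2 * t) ^ (1 + α) :=
            rpow_le_rpow (by linarith) (by linarith) (by linarith)
        _ = 2 ^ (1 + α) * t ^ (1 + α) := mul_rpow (by norm_num) ht
        _ ≤ 4 * t ^ (1 + α) := mul_le_mul_of_nonneg_right h2 hpow.le
    nlinarith [sq_nonneg L, sq_nonneg d]

theorem integrable_sq_sub_div_abs_rpow {α : ℝ} (hα₀ : 0 < α) (hα₁ : α ≤ 1) {g : ℝ → ℝ} {C : ℝ}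
    {K : ℝ≥0} (hC : ∀ y, |g y| ≤ C) (hK : LipschitzWith K g) (x : ℝ) :
    Integrable (fun z => (g x - g (x + z)) ^ 2 / |z| ^ (1 + α)) := by
  have hdom : Integrable fun z : ℝ => 4 * ((K : ℝ) ^ 2 + (2 * C) ^ 2) * (1 + ‖z‖) ^ (-(1 + α)) :=
    (integrable_one_add_norm (by simp; linarith)).const_mul _
  have hmeas : Measurable fun z => (g x - g (x + z)) ^ 2 / |z| ^ (1 + α) := by
    have := hK.continuous
    fun_prop
  refine hdom.mono' hmeas.aestronglyMeasurable (ae_of_all _ fun z => ?_)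
  rw [Real.norm_of_nonneg (by positivity), ← Real.norm_eq_abs]
  refine sq_div_abs_rpow_le_mul_one_add_abs_rpow hα₀.le hα₁ ?_ ?_
  · simpa [← Real.dist_eq, dist_comm] using hK.dist_le_mul (x + z) x
  · linarith [abs_sub (g x) (g (x + z)), hC x, hC (x + z)]

theorem sq_integral_abs_le_integral_sq_div_mul_integral {X : Type*} [MeasurableSpace X]
    {μ : Measure X} {g w : X → ℝ} (hw : ∀ᵐ z ∂μ, 0 < w z) (hg : Integrable g μ)
    (hgw : Integrable (fun z => g z ^ 2 / w z) μ) (hwi : Integrable w μ) :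
    (∫ z, |g z| ∂μ) ^ 2 ≤ (∫ z, g z ^ 2 / w z ∂μ) * ∫ z, w z ∂μ := by
  set I := ∫ z, |g z| ∂μ
  set A := ∫ z, g z ^ 2 / w z ∂μ
  set B := ∫ z, w z ∂μ
  have hquad : ∀ t : ℝ, 0 ≤ B * (t * t) + (-2 * I) * t + A := fun t => by
    have hint :
        ∫ z, (g z ^ 2 / w z - 2 * t * |g z| + t ^ 2 * w z) ∂μ = A - 2 * t * I + t ^ 2 * B := by
      have hsub : Integrable (fun z => g z ^ 2 / w z - 2 * t * |g z|) μ :=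
        hgw.sub (hg.abs.const_mul _)
      rw [integral_add hsub (hwi.const_mul _), integral_sub hgw (hg.abs.const_mul _),
        integral_const_mul, integral_const_mul]
    have hpos : 0 ≤ ∫ z, (g z ^ 2 / w z - 2 * t * |g z| + t ^ 2 * w z) ∂μ := by
      refine integral_nonneg_of_ae (hw.mono fun z hz => ?_)
      have hsq : (|g z| - t * w z) ^ 2 / w z = g z ^ 2 / w z - 2 * t * |g z| + t ^ 2 * w z := by
        field_simp
        linear_combination sq_abs (g z)
      show 0 ≤ g z ^ 2 / w z - 2 * t * |g z| + t ^ 2 * w z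
      rw [← hsq]
      positivity
    linarith
  have := discrim_le_zero hquad
  rw [discrim] at this
  linarith

theorem mul_abs_sub_abs_sub_le_setIntegral_abs_sub {u f : ℝ → ℝ}
    (hu : ∀ y, HasDerivAt u (f y) y) (hf : Continuous f) (x : ℝ) {R : ℝ} (hR : 0 ≤ R) :
    R * |f x| - |u (x + R) - u x| ≤ ∫ z in Ioc 0 R, |f x - f (x + z)| := by
  have hFTC : ∫ z in (0 : ℝ)..R, (f x - f (x + z)) = R * f x - (u (x + R) - u x) := by
    have hfx : IntervalIntegrable (fun z => f (x + z)) volume 0 R :=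
      (hf.comp (continuous_const_add x)).intervalIntegrable _ _
    rw [intervalIntegral.integral_sub intervalIntegrable_const hfx,
      intervalIntegral.integral_comp_add_left f x,
      intervalIntegral.integral_eq_sub_of_hasDerivAt (fun y _ => hu y) (hf.intervalIntegrable _ _)]
    simp
  calc R * |f x| - |u (x + R) - u x| = |R * f x| - |u (x + R) - u x| := by
        rw [abs_mul, abs_of_nonneg hR]
    _ ≤ |R * f x - (u (x + R) - u x)| := abs_sub_abs_le_abs_sub _ _
    _ = |∫ z in (0 : ℝ)..R, (f x - f (x + z))| := by rw [hFTC]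
    _ ≤ ∫ z in (0 : ℝ)..R, |f x - f (x + z)| := intervalIntegral.abs_integral_le_integral_abs hR
    _ = ∫ z in Ioc 0 R, |f x - f (x + z)| := intervalIntegral.integral_of_le hR

theorem setIntegral_Ioc_rpow {r R : ℝ} (hr : 0 ≤ r) (hR : 0 ≤ R) :
    ∫ z in Ioc 0 R, z ^ r = R ^ (r + 1) / (r + 1) := by
  rw [← intervalIntegral.integral_of_le hR, integral_rpow (Or.inl (by linarith)),
    zero_rpow (by linarith), sub_zero]

theorem sq_setIntegral_abs_sub_le_dissip_mul {α : ℝ} (hα₀ : 0 < α) (hα₁ : α ≤ 1) {f : ℝ → ℝ}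
    {C : ℝ} {K : ℝ≥0} (hC : ∀ y, |f y| ≤ C) (hK : LipschitzWith K f) (x : ℝ) {R : ℝ}
    (hR : 0 ≤ R) :
    (∫ z in Ioc 0 R, |f x - f (x + z)|) ^ 2 ≤ dissip α f x * (R ^ (2 + α) / (2 + α)) := by
  have hint := integrable_sq_sub_div_abs_rpow hα₀ hα₁ hC hK x
  have hIoc : IntegrableOn (fun z => (f x - f (x + z)) ^ 2 / z ^ (1 + α)) (Ioc 0 R) :=
    hint.integrableOn.congr_fun (fun z hz => by dsimp only; rw [abs_of_pos hz.1])
      measurableSet_Ioc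
  have hCS := sq_integral_abs_le_integral_sq_div_mul_integral
    ((ae_restrict_iff' measurableSet_Ioc).mpr
      (ae_of_all _ fun z hz => rpow_pos_of_pos hz.1 (1 + α)))
    (continuous_const.sub (hK.continuous.comp (continuous_const_add x))).integrableOn_Ioc hIoc
    (intervalIntegral.intervalIntegrable_rpow' (by linarith : -1 < 1 + α)).1
  have hrestrict : ∫ z in Ioc 0 R, (f x - f (x + z)) ^ 2 / z ^ (1 + α) ≤ dissip α f x := by
    rw [setIntegral_congr_fun measurableSet_Ioc
      (g := fun z => (f x - f (x + z)) ^ 2 / |z| ^ (1 + α)) fun z hz => by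
        dsimp only; rw [abs_of_pos hz.1]]
    exact setIntegral_le_integral hint (ae_of_all _ fun z => by positivity)
  rw [setIntegral_Ioc_rpow (by linarith) hR, show 1 + α + 1 = 2 + α by ring] at hCS
  exact hCS.trans (mul_le_mul_of_nonneg_right hrestrict (by positivity))

theorem le_dissip_of_forall_abs_sub_le {α : ℝ} (hα₀ : 0 < α) (hα₁ : α ≤ 1) {u f : ℝ → ℝ}
    (hu : ∀ y, HasDerivAt u (f y) y) {C : ℝ} {K : ℝ≥0} (hC : ∀ y, |f y| ≤ C)
    (hK : LipschitzWith K f) {V : ℝ} (hV : 0 < V) (hamp : ∀ a b, |u a - u b| ≤ V) (x : ℝ) :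
    (2 + α) / 2 ^ (2 + α) * |f x| ^ (2 + α) / V ^ α ≤ dissip α f x := by
  rcases eq_or_ne (f x) 0 with hfx | hfx
  · rw [hfx, abs_zero, zero_rpow (by linarith), mul_zero, zero_div]
    exact integral_nonneg fun z => by positivity
  have hm : 0 < |f x| := abs_pos.mpr hfx
  set R := 2 * V / |f x|
  have hR : 0 < R := by positivity
  have hV_le : V ≤ ∫ z in Ioc 0 R, |f x - f (x + z)| := by
    have hRm : R * |f x| = 2 * V := div_mul_cancel₀ _ hm.ne'
    linarith [mul_abs_sub_abs_sub_le_setIntegral_abs_sub hu hK.continuous x hR.le, hamp (x + R) x]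
  have hVsq : V ^ 2 ≤ dissip α f x * (R ^ (2 + α) / (2 + α)) :=
    (pow_le_pow_left₀ hV.le hV_le 2).trans
      (sq_setIntegral_abs_sub_le_dissip_mul hα₀ hα₁ hC hK x hR.le)
  have hconst :
      (2 + α) / 2 ^ (2 + α) * |f x| ^ (2 + α) / V ^ α = (2 + α) * V ^ 2 / R ^ (2 + α) := by
    rw [div_rpow (by positivity) hm.le, mul_rpow (by norm_num) hV.le, rpow_add hV, rpow_two]
    have : 0 < V ^ α := rpow_pos_of_pos hV α
    have : 0 < |f x| ^ (2 + α) := rpow_pos_of_pos hm _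
    have : (0 : ℝ) < 2 ^ (2 + α) := rpow_pos_of_pos two_pos _
    field_simp
  rw [hconst, div_le_iff₀ (rpow_pos_of_pos hR _)]
  calc (2 + α) * V ^ 2 ≤ (2 + α) * (dissip α f x * (R ^ (2 + α) / (2 + α))) := by gcongr
    _ = dissip α f x * R ^ (2 + α) := by field_simp

/-- nonlinear maximum principle — enhancement of dissipation by
small amplitudes: `D_α u'(x) ≥ c₁ |u'(x)|^{2+α} / V^α`, with `c₁` depending only on `α`. -/
theorem nonlinear_max_principle
    (α : ℝ) (hα₀ : 0 < α) (hα₁ : α < 1) :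
    ∃ c₁ : ℝ, 0 < c₁ ∧
      ∀ (u : ℝ → ℝ) (V : ℝ),
        ContDiff ℝ 2 u → Function.Periodic u (2 * π) →
        (¬ ∃ a : ℝ, ∀ x, u x = a) →
        V = sSup (Set.range u) - sInf (Set.range u) → 0 < V →
        ∀ x : ℝ, c₁ * |deriv u x| ^ (2 + α) / V ^ α ≤ dissip α (deriv u) x := by
  refine ⟨(2 + α) / 2 ^ (2 + α), by positivity, ?_⟩
  intro u V hu hper _ hVdef hV x
  have hu' : ContDiff ℝ 1 (deriv u) := (contDiff_succ_iff_deriv.mp hu).2.2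
  obtain ⟨C, hC⟩ := isBounded_iff_forall_norm_le.mp
    (hper.deriv.isBounded_of_continuous two_pi_pos.ne' hu'.continuous)
  obtain ⟨K, hK⟩ := hper.deriv.exists_lipschitzWith two_pi_pos.ne' hu'
  have hamp : ∀ a b, |u a - u b| ≤ V := fun a b => by
    have hbdd := hper.isBounded_of_continuous two_pi_pos.ne' hu.continuous
    rw [hVdef, ← Real.diam_eq hbdd, ← Real.dist_eq]
    exact Metric.dist_le_diam_of_mem hbdd (mem_range_self a) (mem_range_self b)
  exact le_dissip_of_forall_abs_sub_le hα₀ hα₁.le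
    (fun y => (hu.differentiable two_ne_zero y).hasDerivAt) (fun y => hC _ (mem_range_self y))
    hK hV hamp x
end

section
/- Let 0 < α < 1 and let (ρ, u) be a global smooth 2π-periodic solution of the fractional Euler alignment system satisfying, for some constants C, δ > 0 and ū ∈ ℝ: sup_x |u(x,t) − ū| ≤ C e^{−δt}, sup_x |∂_x u(x,t)| ≤ C e^{−δt}, and sup_{t≥0}( sup_x |ρ(x,t)| + sup_x |∂_x ρ(x,t)| ) < ∞. Then there exist a Lipschitz 2π-periodic function ρ_∞ : ℝ → ℝ and constants C', δ' > 0 such that sup_x |ρ(x,t) − ρ_∞(x − tū)| ≤ C' e^{−δ't} for all t > 0. -/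
open Real MeasureTheory

/-- existence of a limiting flocking density profile: if the velocity
aligns exponentially fast (together with its slope), and the density and its slope
stay uniformly bounded, then the density converges exponentially fast, uniformly,
to a traveling wave `ρ_∞(x - tū)` with a Lipschitz periodic profile. -/
theorem flocking_state_existence
    (α : ℝ) (hα₀ : 0 < α) (hα₁ : α < 1)
    (ρ u : ℝ → ℝ → ℝ)
    (hρsm : ContDiffOn ℝ (⊤ : ℕ∞) (fun p : ℝ × ℝ => ρ p.1 p.2) (Set.univ ×ˢ Set.Ici (0:ℝ)))
    (husm : ContDiffOn ℝ (⊤ : ℕ∞) (fun p : ℝ × ℝ => u p.1 p.2) (Set.univ ×ˢ Set.Ici (0:ℝ)))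
    (hρper : ∀ t, 0 ≤ t → Function.Periodic (fun x => ρ x t) (2 * π))
    (huper : ∀ t, 0 ≤ t → Function.Periodic (fun x => u x t) (2 * π))
    (hsol : ∀ x t, 0 ≤ t → IsEulerAlignSol α ρ u x t)
    (C δ ubar : ℝ) (hC : 0 < C) (hδ : 0 < δ)
    (hu : ∀ x t, 0 ≤ t → |u x t - ubar| ≤ C * Real.exp (-δ * t))
    (hux : ∀ x t, 0 ≤ t → |deriv (fun y => u y t) x| ≤ C * Real.exp (-δ * t))
    (hρbdd : ∃ K : ℝ, ∀ x t, 0 ≤ t →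
      |ρ x t| + |deriv (fun y => ρ y t) x| ≤ K) :
    ∃ ρ_inf : ℝ → ℝ, (∃ L : NNReal, LipschitzWith L ρ_inf) ∧
      Function.Periodic ρ_inf (2 * π) ∧
      ∃ C' δ' : ℝ, 0 < C' ∧ 0 < δ' ∧
        ∀ x t, 0 < t → |ρ x t - ρ_inf (x - t * ubar)| ≤ C' * Real.exp (-δ' * t) := by
  obtain ⟨K, hK⟩ := hρbdd
  have hK0 : 0 ≤ K := le_trans (by positivity) (hK 0 0 le_rfl)
  set M : ℝ := 2 * K * C with hM
  have hM0 : 0 ≤ M := by positivity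
  set g : ℝ → ℝ → ℝ := fun x t => ρ (x + t * ubar) t with hgdef
  have hnhds : ∀ (y t : ℝ), 0 < t →
      (Set.univ ×ˢ Set.Ici (0:ℝ)) ∈ nhds ((y, t) : ℝ × ℝ) := by
    intro y t ht
    rw [mem_nhds_iff]
    exact ⟨Set.univ ×ˢ Set.Ioi 0, Set.prod_mono le_rfl Set.Ioi_subset_Ici_self,
      isOpen_univ.prod isOpen_Ioi, ⟨trivial, ht⟩⟩
  have hρdiff : ∀ y t : ℝ, 0 < t →
      DifferentiableAt ℝ (fun p : ℝ × ℝ => ρ p.1 p.2) (y, t) :=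
    fun y t ht => (hρsm.contDiffAt (hnhds y t ht)).differentiableAt (by simp)
  have hudiff : ∀ y t : ℝ, 0 < t →
      DifferentiableAt ℝ (fun p : ℝ × ℝ => u p.1 p.2) (y, t) :=
    fun y t ht => (husm.contDiffAt (hnhds y t ht)).differentiableAt (by simp)
  have hx_inner : ∀ (y t : ℝ), HasDerivAt (fun z : ℝ => ((z, t) : ℝ × ℝ)) ((1:ℝ), (0:ℝ)) y :=
    fun y t => (hasDerivAt_id y).prodMk (hasDerivAt_const y t)
  have ht_inner : ∀ (y t : ℝ), HasDerivAt (fun s : ℝ => ((y, s) : ℝ × ℝ)) ((0:ℝ), (1:ℝ)) t :=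
    fun y t => (hasDerivAt_const t y).prodMk (hasDerivAt_id t)
  -- spatial partial derivatives exist
  have hρdx : ∀ y t : ℝ, 0 < t →
      HasDerivAt (fun z => ρ z t) (fderiv ℝ (fun p : ℝ × ℝ => ρ p.1 p.2) (y,t) (1,0)) y :=
    fun y t ht => HasFDerivAt.comp_hasDerivAt (l := fun p : ℝ × ℝ => ρ p.1 p.2)
      (f := fun z : ℝ => ((z, t) : ℝ × ℝ)) y (hρdiff y t ht).hasFDerivAt (hx_inner y t)
  have hudx : ∀ y t : ℝ, 0 < t →
      HasDerivAt (fun z => u z t) (fderiv ℝ (fun p : ℝ × ℝ => u p.1 p.2) (y,t) (1,0)) y :=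
    fun y t ht => HasFDerivAt.comp_hasDerivAt (l := fun p : ℝ × ℝ => u p.1 p.2)
      (f := fun z : ℝ => ((z, t) : ℝ × ℝ)) y (hudiff y t ht).hasFDerivAt (hx_inner y t)
  have hρdt : ∀ y t : ℝ, 0 < t →
      HasDerivAt (fun s => ρ y s) (fderiv ℝ (fun p : ℝ × ℝ => ρ p.1 p.2) (y,t) (0,1)) t :=
    fun y t ht => HasFDerivAt.comp_hasDerivAt (l := fun p : ℝ × ℝ => ρ p.1 p.2)
      (f := fun s : ℝ => ((y, s) : ℝ × ℝ)) t (hρdiff y t ht).hasFDerivAt (ht_inner y t)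
  -- time derivative of g
  have hgt : ∀ x t : ℝ, 0 < t →
      HasDerivAt (fun s => g x s)
        (-(deriv (fun z => ρ z t) (x + t*ubar) * (u (x + t*ubar) t - ubar)
           + ρ (x + t*ubar) t * deriv (fun z => u z t) (x + t*ubar))) t := by
    intro x t ht
    have hinner : HasDerivAt (fun s : ℝ => ((x + s * ubar, s) : ℝ × ℝ)) ((ubar:ℝ), (1:ℝ)) t := by
      have h1 : HasDerivAt (fun s : ℝ => x + s * ubar) ubar t := by
        simpa using ((hasDerivAt_id t).mul_const ubar).const_add x
      exact h1.prodMk (hasDerivAt_id t)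
    have hg' : HasDerivAt (fun s => g x s)
        (fderiv ℝ (fun p : ℝ × ℝ => ρ p.1 p.2) (x + t*ubar, t) (ubar, 1)) t :=
      HasFDerivAt.comp_hasDerivAt (l := fun p : ℝ × ℝ => ρ p.1 p.2)
        (f := fun s : ℝ => ((x + s * ubar, s) : ℝ × ℝ)) t
        (hρdiff (x + t*ubar) t ht).hasFDerivAt hinner
    have hsplit : fderiv ℝ (fun p : ℝ × ℝ => ρ p.1 p.2) (x + t*ubar, t) (ubar, 1)
        = ubar * fderiv ℝ (fun p : ℝ × ℝ => ρ p.1 p.2) (x + t*ubar, t) (1,0)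
          + fderiv ℝ (fun p : ℝ × ℝ => ρ p.1 p.2) (x + t*ubar, t) (0,1) := by
      have h : ((ubar : ℝ), (1:ℝ)) = ubar • ((1:ℝ),(0:ℝ)) + ((0:ℝ),(1:ℝ)) := by
        simp [Prod.ext_iff]
      rw [h, map_add, ContinuousLinearMap.map_smul, smul_eq_mul]
    have hρxd := hρdx (x + t*ubar) t ht
    have hρtd := hρdt (x + t*ubar) t ht
    have huxd := hudx (x + t*ubar) t ht
    have hpde := (hsol (x + t*ubar) t ht.le).1
    have e1 : deriv (fun z => ρ z t) (x + t*ubar)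
        = fderiv ℝ (fun p : ℝ × ℝ => ρ p.1 p.2) (x + t*ubar, t) (1,0) := hρxd.deriv
    have e2 : deriv (fun z => u z t) (x + t*ubar)
        = fderiv ℝ (fun p : ℝ × ℝ => u p.1 p.2) (x + t*ubar, t) (1,0) := huxd.deriv
    have e3 : deriv (fun s => ρ (x + t*ubar) s) t
        = fderiv ℝ (fun p : ℝ × ℝ => ρ p.1 p.2) (x + t*ubar, t) (0,1) := hρtd.deriv
    have e4 : deriv (fun z => ρ z t * u z t) (x + t*ubar)
        = fderiv ℝ (fun p : ℝ × ℝ => ρ p.1 p.2) (x + t*ubar, t) (1,0) * u (x + t*ubar) t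
          + ρ (x + t*ubar) t * fderiv ℝ (fun p : ℝ × ℝ => u p.1 p.2) (x + t*ubar, t) (1,0) :=
      (hρxd.mul huxd).deriv
    convert hg' using 1
    rw [hsplit, e1, e2]
    rw [e3, e4] at hpde
    linarith
  -- derivative bound
  have hgt_bd : ∀ x t : ℝ, 0 < t → ∃ d, HasDerivAt (fun s => g x s) d t
      ∧ |d| ≤ M * Real.exp (-δ * t) := by
    intro x t ht
    refine ⟨_, hgt x t ht, ?_⟩
    have h1 : |deriv (fun z => ρ z t) (x + t*ubar)| ≤ K := by
      have := hK (x + t*ubar) t ht.le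
      have := abs_nonneg (ρ (x + t*ubar) t); linarith
    have h2 : |ρ (x + t*ubar) t| ≤ K := by
      have := hK (x + t*ubar) t ht.le
      have := abs_nonneg (deriv (fun z => ρ z t) (x + t*ubar)); linarith
    have h3 := hu (x + t*ubar) t ht.le
    have h4 := hux (x + t*ubar) t ht.le
    have he : (0:ℝ) < Real.exp (-δ*t) := Real.exp_pos _
    rw [abs_neg]
    calc |deriv (fun z => ρ z t) (x + t*ubar) * (u (x + t*ubar) t - ubar)
          + ρ (x + t*ubar) t * deriv (fun z => u z t) (x + t*ubar)|
        ≤ |deriv (fun z => ρ z t) (x + t*ubar)| * |u (x + t*ubar) t - ubar|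
          + |ρ (x + t*ubar) t| * |deriv (fun z => u z t) (x + t*ubar)| := by
          refine (abs_add_le _ _).trans ?_
          rw [abs_mul, abs_mul]
      _ ≤ K * (C * Real.exp (-δ*t)) + K * (C * Real.exp (-δ*t)) :=
          add_le_add (mul_le_mul h1 h3 (abs_nonneg _) hK0) (mul_le_mul h2 h4 (abs_nonneg _) hK0)
      _ = M * Real.exp (-δ*t) := by rw [hM]; ring
  -- the comparison function
  set ψ : ℝ → ℝ := fun r => (M/δ) * Real.exp (-δ * r) with hψdef
  have hψd : ∀ r : ℝ, HasDerivAt ψ (-(M * Real.exp (-δ*r))) r := by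
    intro r
    have h1 : HasDerivAt (fun r : ℝ => -δ * r) (-δ) r := by
      simpa using (hasDerivAt_id r).const_mul (-δ)
    have h3 := ((Real.hasDerivAt_exp (-δ*r)).comp r h1).const_mul (M/δ)
    have h4 : -(M * Real.exp (-δ*r)) = M / δ * (Real.exp (-δ * r) * -δ) := by
      field_simp
    rw [h4]
    exact h3
  have hψ0 : ∀ r, 0 ≤ ψ r := fun r => by positivity
  have hψanti : ∀ s t : ℝ, s ≤ t → ψ t ≤ ψ s := by
    intro s t hst
    have h : Real.exp (-δ*t) ≤ Real.exp (-δ*s) := Real.exp_le_exp.2 (by nlinarith)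
    have hMδ : (0:ℝ) ≤ M/δ := by positivity
    exact mul_le_mul_of_nonneg_left h hMδ
  have hψcont : Continuous ψ := by
    apply Continuous.mul continuous_const
    exact Real.continuous_exp.comp (continuous_const.mul continuous_id)
  -- main Cauchy estimate
  have hkey : ∀ x s t : ℝ, 0 < s → s ≤ t → |g x t - g x s| ≤ ψ s - ψ t := by
    intro x s t hs hst
    have hder : ∀ r ∈ Set.Icc s t, ∃ d, HasDerivAt (fun w => g x w) d r
        ∧ |d| ≤ M * Real.exp (-δ*r) :=
      fun r hr => hgt_bd x r (lt_of_lt_of_le hs hr.1)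
    have hcont : ContinuousOn (fun r => g x r) (Set.Icc s t) := by
      intro r hr
      obtain ⟨d, hd, _⟩ := hder r hr
      exact hd.continuousAt.continuousWithinAt
    have hmono1 : AntitoneOn (fun r => g x r + ψ r) (Set.Icc s t) := by
      apply antitoneOn_of_deriv_nonpos (convex_Icc s t) (hcont.add hψcont.continuousOn)
      · intro r hr
        obtain ⟨d, hd, _⟩ := hder r (interior_subset hr)
        exact (hd.add (hψd r)).differentiableAt.differentiableWithinAt
      · intro r hr
        obtain ⟨d, hd, hdb⟩ := hder r (interior_subset hr)
        rw [(hd.add (hψd r)).deriv]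
        have := (abs_le.1 hdb).2
        linarith
    have hmono2 : MonotoneOn (fun r => g x r - ψ r) (Set.Icc s t) := by
      apply monotoneOn_of_deriv_nonneg (convex_Icc s t) (hcont.sub hψcont.continuousOn)
      · intro r hr
        obtain ⟨d, hd, _⟩ := hder r (interior_subset hr)
        exact (hd.sub (hψd r)).differentiableAt.differentiableWithinAt
      · intro r hr
        obtain ⟨d, hd, hdb⟩ := hder r (interior_subset hr)
        rw [(hd.sub (hψd r)).deriv]
        have := (abs_le.1 hdb).1
        linarith
    have hmem_s : s ∈ Set.Icc s t := ⟨le_rfl, hst⟩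
    have hmem_t : t ∈ Set.Icc s t := ⟨hst, le_rfl⟩
    have h1 := hmono1 hmem_s hmem_t hst
    have h2 := hmono2 hmem_s hmem_t hst
    simp only at h1 h2
    rw [abs_le]
    constructor <;> linarith
  have hkey' : ∀ x s t : ℝ, 0 < s → s ≤ t → |g x t - g x s| ≤ ψ s := by
    intro x s t hs hst
    have := hψ0 t
    linarith [hkey x s t hs hst]
  -- Cauchy sequence and limit
  have hψtendsto : Filter.Tendsto (fun N : ℕ => ψ ((N:ℝ)+1)) Filter.atTop (nhds 0) := by
    have h1 : Filter.Tendsto (fun N : ℕ => δ * ((N:ℝ)+1)) Filter.atTop Filter.atTop :=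
      Filter.Tendsto.const_mul_atTop hδ
        (Filter.tendsto_atTop_add_const_right _ 1 tendsto_natCast_atTop_atTop)
    have h2 : Filter.Tendsto (fun N : ℕ => Real.exp (-δ * ((N:ℝ)+1))) Filter.atTop (nhds 0) := by
      have h := Real.tendsto_exp_atBot.comp (Filter.Tendsto.comp Filter.tendsto_neg_atTop_atBot h1)
      have heq : (fun N : ℕ => Real.exp (-δ * ((N:ℝ)+1)))
          = Real.exp ∘ Neg.neg ∘ fun N : ℕ => δ * ((N:ℝ)+1) := by
        funext N; simp [Function.comp, neg_mul]
      rw [heq]; exact h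
    have h3 := h2.const_mul (M/δ)
    simpa [hψdef, neg_mul] using h3
  have hcauchy : ∀ x : ℝ, CauchySeq (fun n : ℕ => g x ((n:ℝ)+1)) := by
    intro x
    apply cauchySeq_of_le_tendsto_0 (fun N : ℕ => ψ ((N:ℝ)+1)) _ hψtendsto
    have main : ∀ n m N : ℕ, N ≤ n → N ≤ m → m ≤ n →
        dist (g x ((n:ℝ)+1)) (g x ((m:ℝ)+1)) ≤ ψ ((N:ℝ)+1) := by
      intro n m N hn hm hmn
      rw [Real.dist_eq]
      have h0 : (0:ℝ) < (m:ℝ)+1 := by positivity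
      have h1 : ((m:ℝ)+1) ≤ ((n:ℝ)+1) := by
        have : (m:ℝ) ≤ (n:ℝ) := by exact_mod_cast hmn
        linarith
      refine (hkey' x ((m:ℝ)+1) ((n:ℝ)+1) h0 h1).trans ?_
      apply hψanti
      have : (N:ℝ) ≤ (m:ℝ) := by exact_mod_cast hm
      linarith
    intro n m N hn hm
    rcases le_total m n with h | h
    · exact main n m N hn hm h
    · rw [dist_comm]; exact main m n N hm hn h
  have hlim : ∀ x : ℝ, ∃ l : ℝ, Filter.Tendsto (fun n : ℕ => g x ((n:ℝ)+1)) Filter.atTop (nhds l) :=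
    fun x => cauchySeq_tendsto_of_complete (hcauchy x)
  choose ρ_inf hρinf using hlim
  -- convergence rate
  have hrate : ∀ x t : ℝ, 1 ≤ t → |g x t - ρ_inf x| ≤ ψ t := by
    intro x t ht1
    have ht0 : (0:ℝ) < t := lt_of_lt_of_le one_pos ht1
    have htend : Filter.Tendsto (fun n : ℕ => |g x t - g x ((n:ℝ)+1)|) Filter.atTop
        (nhds |g x t - ρ_inf x|) := (Filter.Tendsto.sub tendsto_const_nhds (hρinf x)).abs
    apply le_of_tendsto htend
    filter_upwards [Filter.eventually_ge_atTop ⌈t⌉₊] with n hn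
    have h1 : t ≤ (n:ℝ) := (Nat.le_ceil t).trans (by exact_mod_cast hn)
    have h2 : t ≤ (n:ℝ)+1 := by linarith
    have := hkey' x t ((n:ℝ)+1) ht0 h2
    rwa [abs_sub_comm]
  -- Lipschitz property
  have hgLip : ∀ (t : ℝ), 0 < t → ∀ a b : ℝ, |g a t - g b t| ≤ K * |a - b| := by
    intro t ht a b
    have hder : ∀ z : ℝ, HasDerivAt (fun w => g w t)
        (deriv (fun w => ρ w t) (z + t*ubar)) z := by
      intro z
      have h1 : HasDerivAt (fun w => ρ w t) (deriv (fun w => ρ w t) (z + t*ubar)) (z + t*ubar) :=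
        (hρdx (z + t*ubar) t ht).differentiableAt.hasDerivAt
      have h2 : HasDerivAt (fun w : ℝ => w + t*ubar) 1 z := (hasDerivAt_id z).add_const _
      have h3 := HasDerivAt.comp z h1 h2
      simp only [mul_one] at h3
      exact h3
    have hbd : ∀ z : ℝ, |deriv (fun w => ρ w t) (z + t*ubar)| ≤ K := by
      intro z
      have := hK (z + t*ubar) t ht.le
      have := abs_nonneg (ρ (z + t*ubar) t); linarith
    have := Convex.norm_image_sub_le_of_norm_hasDerivWithin_le
      (f := fun w => g w t) (f' := fun z => deriv (fun w => ρ w t) (z + t*ubar))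
      (s := Set.univ) (fun z _ => (hder z).hasDerivWithinAt)
      (fun z _ => by simpa [Real.norm_eq_abs] using hbd z) convex_univ
      (Set.mem_univ b) (Set.mem_univ a)
    simpa [Real.norm_eq_abs] using this
  have hLip : LipschitzWith ⟨K, hK0⟩ ρ_inf := by
    apply LipschitzWith.of_dist_le_mul
    intro a b
    simp only [Real.dist_eq, NNReal.coe_mk]
    have htend : Filter.Tendsto (fun n : ℕ => |g a ((n:ℝ)+1) - g b ((n:ℝ)+1)|) Filter.atTop
        (nhds |ρ_inf a - ρ_inf b|) := ((hρinf a).sub (hρinf b)).abs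
    apply le_of_tendsto htend
    filter_upwards with n
    exact hgLip ((n:ℝ)+1) (by positivity) a b
  -- periodicity
  have hper : Function.Periodic ρ_inf (2*π) := by
    intro x
    have heq : ∀ n : ℕ, g (x + 2*π) ((n:ℝ)+1) = g x ((n:ℝ)+1) := by
      intro n
      show ρ (x + 2*π + ((n:ℝ)+1) * ubar) ((n:ℝ)+1) = ρ (x + ((n:ℝ)+1) * ubar) ((n:ℝ)+1)
      have := hρper ((n:ℝ)+1) (by positivity) (x + ((n:ℝ)+1)*ubar)
      simpa [add_comm, add_left_comm, add_assoc] using this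
    have h2 : Filter.Tendsto (fun n : ℕ => g x ((n:ℝ)+1)) Filter.atTop
        (nhds (ρ_inf (x + 2*π))) := by
      have h := hρinf (x + 2*π)
      rwa [show (fun n : ℕ => g (x + 2*π) ((n:ℝ)+1)) = (fun n : ℕ => g x ((n:ℝ)+1))
        from funext heq] at h
    exact tendsto_nhds_unique h2 (hρinf x)
  -- bound on the profile
  have hρinf_bd : ∀ x, |ρ_inf x| ≤ K := by
    intro x
    apply le_of_tendsto (hρinf x).abs
    filter_upwards with n
    have h := hK (x + ((n:ℝ)+1)*ubar) ((n:ℝ)+1) (by positivity)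
    have := abs_nonneg (deriv (fun y => ρ y ((n:ℝ)+1)) (x + ((n:ℝ)+1)*ubar))
    show |ρ (x + ((n:ℝ)+1)*ubar) ((n:ℝ)+1)| ≤ K
    linarith
  -- conclusion
  refine ⟨ρ_inf, ⟨⟨K, hK0⟩, hLip⟩, hper,
    (M/δ) + 2*K*Real.exp δ + 1, δ, by positivity, hδ, ?_⟩
  intro x t ht
  have hgx : g (x - t*ubar) t = ρ x t := by
    show ρ (x - t*ubar + t*ubar) t = ρ x t
    ring_nf
  have he : (0:ℝ) < Real.exp (-δ*t) := Real.exp_pos _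
  by_cases h1 : 1 ≤ t
  · have h := hrate (x - t*ubar) t h1
    rw [hgx] at h
    refine h.trans ?_
    have hle : M/δ ≤ (M/δ) + 2*K*Real.exp δ + 1 := by
      have := Real.exp_pos δ
      nlinarith
    calc ψ t = (M/δ) * Real.exp (-δ*t) := rfl
      _ ≤ ((M/δ) + 2*K*Real.exp δ + 1) * Real.exp (-δ*t) :=
          mul_le_mul_of_nonneg_right hle he.le
  · push_neg at h1
    have hb1 : |ρ x t| ≤ K := by
      have := hK x t ht.le
      have := abs_nonneg (deriv (fun y => ρ y t) x); linarith
    have hb2 : |ρ_inf (x - t*ubar)| ≤ K := hρinf_bd _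
    have hb : |ρ x t - ρ_inf (x - t*ubar)| ≤ 2*K :=
      (abs_sub _ _).trans (by linarith)
    have hee : Real.exp (-δ) ≤ Real.exp (-δ*t) := Real.exp_le_exp.2 (by nlinarith)
    have hprod : Real.exp δ * Real.exp (-δ) = 1 := by
      rw [← Real.exp_add]; simp
    have h2K : 2*K ≤ (2*K*Real.exp δ) * Real.exp (-δ*t) := by
      calc 2*K = (2*K*Real.exp δ) * Real.exp (-δ) := by rw [mul_assoc, hprod]; ring
        _ ≤ (2*K*Real.exp δ) * Real.exp (-δ*t) :=
            mul_le_mul_of_nonneg_left hee (by positivity)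
    refine hb.trans (h2K.trans ?_)
    have : (0:ℝ) ≤ (M/δ + 1) * Real.exp (-δ*t) := by positivity
    nlinarith
end
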